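/- Let q, c ∈ ℝ with c ≠ 0, and let A_{ijk} : ℝ⁴ → ℝ be smooth totally symmetric functions of the positional variables. Define the Lagrangian L(x,y) := (1/2)·y¹y²y³y⁴ + (q/c)·Σ_{i,j,k} A_{ijk}(x)·y^i y^j y^k, and set h_{mj}(y) := (1/12)·∂²(y¹y²y³y⁴)/∂y^m∂y^j. Then a smooth curve x : ℝ → ℝ⁴ satisfies the Euler–Lagrange equations ∂L/∂x^m(x(t), ẋ(t)) − d/dt[∂L/∂y^m(x(t), ẋ(t))] = 0 (m = 1,…,4) if and only if for each m and all t: 6·Σ_j (h_{mj}(ẋ) + (q/c)·Σ_k A_{mjk}(x)·ẋ^k)·ẍ^j + (q/c)·Σ_{j,k,l} (∂A_{mjk}/∂x^l + ∂A_{mlk}/∂x^j + ∂A_{mjl}/∂x^k − ∂A_{ljk}/∂x^m)(x)·ẋ^l ẋ^j ẋ^k = 0. -/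

import Mathlib

/-- Partial derivative of `f : ℝ⁴ → ℝ` with respect to the `i`-th coordinate, at `v`. -/
noncomputable def pd (i : Fin 4) (f : (Fin 4 → ℝ) → ℝ) (v : Fin 4 → ℝ) : ℝ :=
  deriv (fun t => f (Function.update v i t)) (v i)



/-- Kronecker delta on `Fin 4`, as a real number. -/
noncomputable def dlt (i m : Fin 4) : ℝ := if i = m then 1 else 0

lemma hasDerivAt_update_apply (y : Fin 4 → ℝ) (m i : Fin 4) (s : ℝ) :
    HasDerivAt (fun t => Function.update y m t i) (dlt i m) s := by
  rcases eq_or_ne i m with h | h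
  · subst h
    simp only [Function.update_self, dlt, if_pos rfl]
    exact hasDerivAt_id s
  · simp only [Function.update_of_ne h, dlt, if_neg h]
    exact hasDerivAt_const s _

lemma hasDerivAt_update_self' (x : Fin 4 → ℝ) (m : Fin 4) (s : ℝ) :
    HasDerivAt (fun t => Function.update x m t) ((Pi.single m 1 : Fin 4 → ℝ)) s := by
  have h : (fun t : ℝ => Function.update x m t)
      = fun t : ℝ => x + (t - x m) • (Pi.single m 1 : Fin 4 → ℝ) := by
    funext t; funext j
    by_cases hj : j = m
    · subst hj; simp [Function.update_self, Pi.single_apply]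
    · simp [Function.update_of_ne hj, Pi.single_apply, hj]
  rw [h]
  have h2 := (((hasDerivAt_id s).sub_const (x m)).smul_const
    ((Pi.single m 1 : Fin 4 → ℝ))).const_add x
  simpa using h2

lemma pd_hasDerivAt' {f : (Fin 4 → ℝ) → ℝ} {x : Fin 4 → ℝ}
    (hf : DifferentiableAt ℝ f x) (m : Fin 4) :
    HasDerivAt (fun s => f (Function.update x m s)) (pd m f x) (x m) := by
  have hpath := hasDerivAt_update_self' x m (x m)
  have hd : DifferentiableAt ℝ (fun s => f (Function.update x m s)) (x m) := by
    have hf' : DifferentiableAt ℝ f (Function.update x m (x m)) := by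
      rwa [Function.update_eq_self]
    exact hf'.comp (x m) hpath.differentiableAt
  exact hd.hasDerivAt

lemma pd_eq_fderiv' {f : (Fin 4 → ℝ) → ℝ} {x : Fin 4 → ℝ}
    (hf : DifferentiableAt ℝ f x) (m : Fin 4) :
    pd m f x = fderiv ℝ f x ((Pi.single m 1 : Fin 4 → ℝ)) := by
  have hpath := hasDerivAt_update_self' x m (x m)
  have hf' : HasFDerivAt f (fderiv ℝ f x) (Function.update x m (x m)) := by
    rw [Function.update_eq_self]; exact hf.hasFDerivAt
  have h := hf'.comp_hasDerivAt (x m) hpath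
  exact (pd_hasDerivAt' hf m).unique h

lemma deriv_comp_curve {f : (Fin 4 → ℝ) → ℝ} (hf : ContDiff ℝ (⊤ : ℕ∞) f)
    {γ : ℝ → Fin 4 → ℝ} (hγ : ContDiff ℝ (⊤ : ℕ∞) γ) (t : ℝ) :
    HasDerivAt (fun s => f (γ s))
      (∑ l : Fin 4, pd l f (γ t) * deriv (fun s => γ s l) t) t := by
  have hγd : HasDerivAt γ (fun l => deriv (fun s => γ s l) t) t := by
    rw [hasDerivAt_pi]
    intro i
    exact ((contDiff_pi.mp hγ i).differentiable (by simp) t).hasDerivAt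
  have hfd := (hf.differentiable (by simp) (γ t)).hasFDerivAt
  have hcomp := hfd.comp_hasDerivAt t hγd
  have key : (fderiv ℝ f (γ t)) (fun l => deriv (fun s => γ s l) t)
      = ∑ l : Fin 4, pd l f (γ t) * deriv (fun s => γ s l) t := by
    have hrep : (fun l => deriv (fun s => γ s l) t)
        = ∑ l : Fin 4, (deriv (fun s => γ s l) t) • (Pi.single l 1 : Fin 4 → ℝ) := by
      rw [← Finset.univ_sum_single (fun l => deriv (fun s => γ s l) t)]
      refine Finset.sum_congr rfl fun l _ => ?_
      ext j; simp [Pi.single_apply]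
    rw [hrep, map_sum]
    refine Finset.sum_congr rfl fun l _ => ?_
    rw [map_smul, ← pd_eq_fderiv' (hf.differentiable (by simp) (γ t)) l, smul_eq_mul, mul_comm]
  rw [← key]
  exact hcomp

lemma pdX (q c : ℝ) (A : Fin 4 → Fin 4 → Fin 4 → (Fin 4 → ℝ) → ℝ)
    (hAsmooth : ∀ i j k : Fin 4, ContDiff ℝ (⊤ : ℕ∞) (A i j k))
    (L : (Fin 4 → ℝ) → (Fin 4 → ℝ) → ℝ)
    (hL : ∀ (x y : Fin 4 → ℝ),
      L x y = (1 / 2) * (y 0 * y 1 * y 2 * y 3)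
        + (q / c) * ∑ i : Fin 4, ∑ j : Fin 4, ∑ k : Fin 4,
            A i j k x * y i * y j * y k)
    (x y : Fin 4 → ℝ) (m : Fin 4) :
    pd m (fun u => L u y) x
      = (q / c) * ∑ i : Fin 4, ∑ j : Fin 4, ∑ k : Fin 4,
          pd m (A i j k) x * y i * y j * y k := by
  have hfun : (fun t => L (Function.update x m t) y)
      = fun t => (1 / 2) * (y 0 * y 1 * y 2 * y 3)
          + (q / c) * ∑ i : Fin 4, ∑ j : Fin 4, ∑ k : Fin 4,
              A i j k (Function.update x m t) * y i * y j * y k := by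
    funext t; rw [hL]
  have hA : ∀ i j k : Fin 4,
      HasDerivAt (fun t => A i j k (Function.update x m t)) (pd m (A i j k) x) (x m) :=
    fun i j k => pd_hasDerivAt' ((hAsmooth i j k).differentiable (by simp) x) m
  have H := ((hasDerivAt_const (x m) (y 0 * y 1 * y 2 * y 3)).const_mul ((1:ℝ)/2)).add
    ((HasDerivAt.sum fun i (_ : i ∈ Finset.univ) =>
      HasDerivAt.sum fun j (_ : j ∈ Finset.univ) =>
      HasDerivAt.sum fun k (_ : k ∈ Finset.univ) =>
        (((hA i j k).mul_const (y i)).mul_const (y j)).mul_const (y k)).const_mul (q/c))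
  show deriv (fun t => L (Function.update x m t) y) (x m) = _
  rw [hfun]
  exact H.deriv.trans (by ring)

lemma pdY (q c : ℝ) (A : Fin 4 → Fin 4 → Fin 4 → (Fin 4 → ℝ) → ℝ)
    (L : (Fin 4 → ℝ) → (Fin 4 → ℝ) → ℝ)
    (hL : ∀ (x y : Fin 4 → ℝ),
      L x y = (1 / 2) * (y 0 * y 1 * y 2 * y 3)
        + (q / c) * ∑ i : Fin 4, ∑ j : Fin 4, ∑ k : Fin 4,
            A i j k x * y i * y j * y k)
    (x y : Fin 4 → ℝ) (m : Fin 4) :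
    pd m (L x) y
      = (1 / 2) * (((dlt 0 m * y 1 + y 0 * dlt 1 m) * y 2 + y 0 * y 1 * dlt 2 m) * y 3
            + y 0 * y 1 * y 2 * dlt 3 m)
        + (q / c) * ∑ i : Fin 4, ∑ j : Fin 4, ∑ k : Fin 4,
            ((A i j k x * dlt i m * y j + A i j k x * y i * dlt j m) * y k
              + A i j k x * y i * y j * dlt k m) := by
  have hfun : (fun t => L x (Function.update y m t))
      = fun t => (1 / 2) * (Function.update y m t 0 * Function.update y m t 1
            * Function.update y m t 2 * Function.update y m t 3)
          + (q / c) * ∑ i : Fin 4, ∑ j : Fin 4, ∑ k : Fin 4,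
              A i j k x * Function.update y m t i * Function.update y m t j
                * Function.update y m t k := by
    funext t; rw [hL]
  have u : ∀ i : Fin 4, HasDerivAt (fun t => Function.update y m t i) (dlt i m) (y m) :=
    fun i => hasDerivAt_update_apply y m i (y m)
  have H := ((((u 0).mul (u 1)).mul (u 2)).mul (u 3)).const_mul ((1:ℝ)/2) |>.add
    ((HasDerivAt.sum fun i (_ : i ∈ Finset.univ) =>
      HasDerivAt.sum fun j (_ : j ∈ Finset.univ) =>
      HasDerivAt.sum fun k (_ : k ∈ Finset.univ) =>
        ((((u i).const_mul (A i j k x)).mul (u j)).mul (u k))).const_mul (q/c))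
  show deriv (fun t => L x (Function.update y m t)) (y m) = _
  rw [hfun]
  exact H.deriv.trans (by simp only [Pi.mul_apply, Function.update_eq_self])

lemma pdP (y : Fin 4 → ℝ) (j : Fin 4) :
    pd j (fun v => v 0 * v 1 * v 2 * v 3) y
      = ((dlt 0 j * y 1 + y 0 * dlt 1 j) * y 2 + y 0 * y 1 * dlt 2 j) * y 3
        + y 0 * y 1 * y 2 * dlt 3 j := by
  have u : ∀ i : Fin 4, HasDerivAt (fun t => Function.update y j t i) (dlt i j) (y j) :=
    fun i => hasDerivAt_update_apply y j i (y j)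
  have H := (((u 0).mul (u 1)).mul (u 2)).mul (u 3)
  show deriv (fun t => Function.update y j t 0 * Function.update y j t 1
      * Function.update y j t 2 * Function.update y j t 3) (y j) = _
  exact H.deriv.trans (by simp only [Pi.mul_apply, Function.update_eq_self])

lemma pdpdP (y : Fin 4 → ℝ) (m j : Fin 4) :
    pd m (pd j (fun v => v 0 * v 1 * v 2 * v 3)) y
      = (dlt 0 j * dlt 1 m + dlt 1 j * dlt 0 m) * (y 2 * y 3)
        + (dlt 0 j * dlt 2 m + dlt 2 j * dlt 0 m) * (y 1 * y 3)
        + (dlt 0 j * dlt 3 m + dlt 3 j * dlt 0 m) * (y 1 * y 2)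
        + (dlt 1 j * dlt 2 m + dlt 2 j * dlt 1 m) * (y 0 * y 3)
        + (dlt 1 j * dlt 3 m + dlt 3 j * dlt 1 m) * (y 0 * y 2)
        + (dlt 2 j * dlt 3 m + dlt 3 j * dlt 2 m) * (y 0 * y 1) := by
  have hfun : pd j (fun v => v 0 * v 1 * v 2 * v 3)
      = fun y' => ((dlt 0 j * y' 1 + y' 0 * dlt 1 j) * y' 2 + y' 0 * y' 1 * dlt 2 j) * y' 3
          + y' 0 * y' 1 * y' 2 * dlt 3 j := funext fun y' => pdP y' j
  rw [hfun]
  have u : ∀ i : Fin 4, HasDerivAt (fun t => Function.update y m t i) (dlt i m) (y m) :=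
    fun i => hasDerivAt_update_apply y m i (y m)
  have a1 := ((u 1).const_mul (dlt 0 j)).add ((u 0).mul_const (dlt 1 j))
  have a2 := (a1.mul (u 2)).add (((u 0).mul (u 1)).mul_const (dlt 2 j))
  have H := (a2.mul (u 3)).add ((((u 0).mul (u 1)).mul (u 2)).mul_const (dlt 3 j))
  show deriv (fun t => ((dlt 0 j * Function.update y m t 1
      + Function.update y m t 0 * dlt 1 j)
      * Function.update y m t 2 + Function.update y m t 0 * Function.update y m t 1 * dlt 2 j)
      * Function.update y m t 3
      + Function.update y m t 0 * Function.update y m t 1 * Function.update y m t 2 * dlt 3 j)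
      (y m) = _
  exact H.deriv.trans (by simp only [Pi.mul_apply, Pi.add_apply, Function.update_eq_self]; ring)

lemma sum_dlt (m : Fin 4) (f : Fin 4 → ℝ) : (∑ i : Fin 4, dlt i m * f i) = f m := by
  simp [dlt, ite_mul, Finset.sum_ite_eq']

lemma sum3_congr {f g : Fin 4 → Fin 4 → Fin 4 → ℝ} (h : ∀ a b c, f a b c = g a b c) :
    (∑ a : Fin 4, ∑ b : Fin 4, ∑ c : Fin 4, f a b c)
      = ∑ a : Fin 4, ∑ b : Fin 4, ∑ c : Fin 4, g a b c :=
  Finset.sum_congr rfl fun a _ => Finset.sum_congr rfl fun b _ =>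
    Finset.sum_congr rfl fun c _ => h a b c

lemma sum2_congr {f g : Fin 4 → Fin 4 → ℝ} (h : ∀ a b, f a b = g a b) :
    (∑ a : Fin 4, ∑ b : Fin 4, f a b) = ∑ a : Fin 4, ∑ b : Fin 4, g a b :=
  Finset.sum_congr rfl fun a _ => Finset.sum_congr rfl fun b _ => h a b

lemma collapse1 (m : Fin 4) (F : Fin 4 → Fin 4 → Fin 4 → ℝ) :
    (∑ i : Fin 4, ∑ j : Fin 4, ∑ k : Fin 4, dlt i m * F i j k)
      = ∑ j : Fin 4, ∑ k : Fin 4, F m j k := by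
  calc (∑ i : Fin 4, ∑ j : Fin 4, ∑ k : Fin 4, dlt i m * F i j k)
      = ∑ i : Fin 4, dlt i m * (∑ j : Fin 4, ∑ k : Fin 4, F i j k) := by
        refine Finset.sum_congr rfl fun i _ => ?_
        rw [Finset.mul_sum]
        exact Finset.sum_congr rfl fun j _ => by rw [Finset.mul_sum]
    _ = ∑ j : Fin 4, ∑ k : Fin 4, F m j k := sum_dlt m _

lemma collapse2 (m : Fin 4) (F : Fin 4 → Fin 4 → Fin 4 → ℝ) :
    (∑ i : Fin 4, ∑ j : Fin 4, ∑ k : Fin 4, dlt j m * F i j k)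
      = ∑ i : Fin 4, ∑ k : Fin 4, F i m k := by
  refine Finset.sum_congr rfl fun i _ => ?_
  calc (∑ j : Fin 4, ∑ k : Fin 4, dlt j m * F i j k)
      = ∑ j : Fin 4, dlt j m * (∑ k : Fin 4, F i j k) := by
        exact Finset.sum_congr rfl fun j _ => by rw [Finset.mul_sum]
    _ = ∑ k : Fin 4, F i m k := sum_dlt m _

lemma collapse3 (m : Fin 4) (F : Fin 4 → Fin 4 → Fin 4 → ℝ) :
    (∑ i : Fin 4, ∑ j : Fin 4, ∑ k : Fin 4, dlt k m * F i j k)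
      = ∑ i : Fin 4, ∑ j : Fin 4, F i j m := by
  refine Finset.sum_congr rfl fun i _ => Finset.sum_congr rfl fun j _ => ?_
  exact sum_dlt m _

lemma sum_comm3_13 (f : Fin 4 → Fin 4 → Fin 4 → ℝ) :
    (∑ a : Fin 4, ∑ b : Fin 4, ∑ c : Fin 4, f a b c)
      = ∑ c : Fin 4, ∑ b : Fin 4, ∑ a : Fin 4, f a b c := by
  calc (∑ a : Fin 4, ∑ b : Fin 4, ∑ c : Fin 4, f a b c)
      = ∑ a : Fin 4, ∑ c : Fin 4, ∑ b : Fin 4, f a b c :=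
        Finset.sum_congr rfl fun _ _ => Finset.sum_comm
    _ = ∑ c : Fin 4, ∑ a : Fin 4, ∑ b : Fin 4, f a b c := Finset.sum_comm
    _ = ∑ c : Fin 4, ∑ b : Fin 4, ∑ a : Fin 4, f a b c :=
        Finset.sum_congr rfl fun _ _ => Finset.sum_comm

lemma sum_comm3_23 (f : Fin 4 → Fin 4 → Fin 4 → ℝ) :
    (∑ a : Fin 4, ∑ b : Fin 4, ∑ c : Fin 4, f a b c)
      = ∑ a : Fin 4, ∑ c : Fin 4, ∑ b : Fin 4, f a b c :=
  Finset.sum_congr rfl fun _ _ => Finset.sum_comm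

lemma dlt_same (i : Fin 4) : dlt i i = 1 := by simp [dlt]

lemma dlt_eq_zero_of_ne {i m : Fin 4} (h : i ≠ m) : dlt i m = 0 := by simp [dlt, h]

/-- For the Berwald–Moor Lagrangian
`L = (1/2)y¹y²y³y⁴ + (q/c)A_{ijk}(x)y^i y^j y^k` with totally symmetric smooth
`A_{ijk}`, a smooth curve satisfies the Euler–Lagrange equations iff it satisfies
`6(h_{mj} + (q/c)A_{mj0})ẍ^j + (q/c)(A_{mjk,l}+A_{mlk,j}+A_{mjl,k}−A_{ljk,m})ẋ^l ẋ^j ẋ^k = 0`,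
where `h_{mj} = (1/12)∂²(y¹y²y³y⁴)/∂y^m∂y^j` is the flag metric. -/
theorem statement16
    (q c : ℝ) (hc : c ≠ 0)
    (A : Fin 4 → Fin 4 → Fin 4 → (Fin 4 → ℝ) → ℝ)
    (hAsmooth : ∀ i j k : Fin 4, ContDiff ℝ (⊤ : ℕ∞) (A i j k))
    (hAsymm : ∀ (i j k : Fin 4) (x : Fin 4 → ℝ),
      A i j k x = A j i k x ∧ A i j k x = A i k j x)
    (L : (Fin 4 → ℝ) → (Fin 4 → ℝ) → ℝ)
    (hL : ∀ (x y : Fin 4 → ℝ),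
      L x y = (1 / 2) * (y 0 * y 1 * y 2 * y 3)
        + (q / c) * ∑ i : Fin 4, ∑ j : Fin 4, ∑ k : Fin 4,
            A i j k x * y i * y j * y k)
    (h : Fin 4 → Fin 4 → (Fin 4 → ℝ) → ℝ)
    (hh : ∀ (m j : Fin 4) (y : Fin 4 → ℝ),
      h m j y = (1 / 12) * pd m (pd j (fun v => v 0 * v 1 * v 2 * v 3)) y)
    (γ : ℝ → Fin 4 → ℝ) (hγ : ContDiff ℝ (⊤ : ℕ∞) γ)
    (dγ ddγ : ℝ → Fin 4 → ℝ)
    (hdγ : ∀ (t : ℝ) (i : Fin 4), dγ t i = deriv (fun s => γ s i) t)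
    (hddγ : ∀ (t : ℝ) (i : Fin 4), ddγ t i = deriv (fun s => dγ s i) t) :
    (∀ (m : Fin 4) (t : ℝ),
        pd m (fun u => L u (dγ t)) (γ t)
          - deriv (fun s => pd m (L (γ s)) (dγ s)) t = 0)
    ↔
    (∀ (m : Fin 4) (t : ℝ),
        6 * ∑ j : Fin 4,
            (h m j (dγ t) + (q / c) * ∑ k : Fin 4, A m j k (γ t) * dγ t k) * ddγ t j
        + (q / c) * ∑ j : Fin 4, ∑ k : Fin 4, ∑ l : Fin 4,
            (pd l (A m j k) (γ t) + pd j (A m l k) (γ t)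
              + pd k (A m j l) (γ t) - pd m (A l j k) (γ t))
              * dγ t l * dγ t j * dγ t k = 0) := by
  have hs1 : ∀ a b c : Fin 4, A a b c = A b a c :=
    fun a b c => funext fun x => (hAsymm a b c x).1
  have hs2 : ∀ a b c : Fin 4, A a b c = A a c b :=
    fun a b c => funext fun x => (hAsymm a b c x).2
  have key : ∀ (m : Fin 4) (t : ℝ),
      pd m (fun u => L u (dγ t)) (γ t) - deriv (fun s => pd m (L (γ s)) (dγ s)) t
      = -(6 * ∑ j : Fin 4,
            (h m j (dγ t) + (q / c) * ∑ k : Fin 4, A m j k (γ t) * dγ t k) * ddγ t j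
        + (q / c) * ∑ j : Fin 4, ∑ k : Fin 4, ∑ l : Fin 4,
            (pd l (A m j k) (γ t) + pd j (A m l k) (γ t)
              + pd k (A m j l) (γ t) - pd m (A l j k) (γ t))
              * dγ t l * dγ t j * dγ t k) := by
    intro m t
    have hw : ∀ i : Fin 4, HasDerivAt (fun s => dγ s i) (ddγ t i) t := by
      intro i
      have hci : ContDiff ℝ (⊤ : ℕ∞) (fun r : ℝ => γ r i) := contDiff_pi.mp hγ i
      have hfun : (fun s => dγ s i) = deriv (fun r : ℝ => γ r i) :=
        funext fun s => hdγ s i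
      have hd : Differentiable ℝ (deriv (fun r : ℝ => γ r i)) := by
        have h2 : ContDiff ℝ (⊤ : ℕ∞) (fun r : ℝ => γ r i) := hci.of_le (by simp)
        exact (contDiff_infty_iff_deriv.mp h2).2.differentiable (by simp)
      have h1 : HasDerivAt (fun s => dγ s i) (deriv (fun s => dγ s i) t) t := by
        rw [hfun]; exact (hd t).hasDerivAt
      rwa [← hddγ t i] at h1
    have hAc : ∀ i j k : Fin 4, HasDerivAt (fun s => A i j k (γ s))
        (∑ l : Fin 4, pd l (A i j k) (γ t) * dγ t l) t := by
      intro i j k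
      have h0 := deriv_comp_curve (hAsmooth i j k) hγ t
      have h1 : (∑ l : Fin 4, pd l (A i j k) (γ t) * deriv (fun s => γ s l) t)
          = ∑ l : Fin 4, pd l (A i j k) (γ t) * dγ t l :=
        Finset.sum_congr rfl fun l _ => by rw [← hdγ]
      rwa [h1] at h0
    have hfun2 : (fun s => pd m (L (γ s)) (dγ s))
        = fun s => (1 / 2) * (((dlt 0 m * dγ s 1 + dγ s 0 * dlt 1 m) * dγ s 2
              + dγ s 0 * dγ s 1 * dlt 2 m) * dγ s 3 + dγ s 0 * dγ s 1 * dγ s 2 * dlt 3 m)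
            + (q / c) * ∑ i : Fin 4, ∑ j : Fin 4, ∑ k : Fin 4,
                ((A i j k (γ s) * dlt i m * dγ s j + A i j k (γ s) * dγ s i * dlt j m) * dγ s k
                  + A i j k (γ s) * dγ s i * dγ s j * dlt k m) :=
      funext fun s => pdY q c A L hL (γ s) (dγ s) m
    have i1 := ((hw 1).const_mul (dlt 0 m)).add ((hw 0).mul_const (dlt 1 m))
    have i2 := (i1.mul (hw 2)).add (((hw 0).mul (hw 1)).mul_const (dlt 2 m))
    have i3 := (i2.mul (hw 3)).add ((((hw 0).mul (hw 1)).mul (hw 2)).mul_const (dlt 3 m))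
    have H := (i3.const_mul ((1:ℝ)/2)).add
      ((HasDerivAt.sum fun i (_ : i ∈ Finset.univ) =>
        HasDerivAt.sum fun j (_ : j ∈ Finset.univ) =>
        HasDerivAt.sum fun k (_ : k ∈ Finset.univ) =>
          (((((hAc i j k).mul_const (dlt i m)).mul (hw j)).add
            (((hAc i j k).mul (hw i)).mul_const (dlt j m))).mul (hw k)).add
            ((((hAc i j k).mul (hw i)).mul (hw j)).mul_const (dlt k m))).const_mul (q/c))
    have hder : deriv (fun s => pd m (L (γ s)) (dγ s)) t
        = 1 / 2 * (((dlt 0 m * ddγ t 1 + ddγ t 0 * dlt 1 m) * dγ t 2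
              + (dlt 0 m * dγ t 1 + dγ t 0 * dlt 1 m) * ddγ t 2
              + (ddγ t 0 * dγ t 1 + dγ t 0 * ddγ t 1) * dlt 2 m) * dγ t 3
            + ((dlt 0 m * dγ t 1 + dγ t 0 * dlt 1 m) * dγ t 2
                + dγ t 0 * dγ t 1 * dlt 2 m) * ddγ t 3
            + ((ddγ t 0 * dγ t 1 + dγ t 0 * ddγ t 1) * dγ t 2
                + dγ t 0 * dγ t 1 * ddγ t 2) * dlt 3 m)
          + q / c * ∑ i : Fin 4, ∑ j : Fin 4, ∑ k : Fin 4,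
              (((∑ l : Fin 4, pd l (A i j k) (γ t) * dγ t l) * dlt i m * dγ t j
                  + A i j k (γ t) * dlt i m * ddγ t j
                  + ((∑ l : Fin 4, pd l (A i j k) (γ t) * dγ t l) * dγ t i
                      + A i j k (γ t) * ddγ t i) * dlt j m) * dγ t k
                + (A i j k (γ t) * dlt i m * dγ t j
                    + A i j k (γ t) * dγ t i * dlt j m) * ddγ t k
                + (((∑ l : Fin 4, pd l (A i j k) (γ t) * dγ t l) * dγ t i
                      + A i j k (γ t) * ddγ t i) * dγ t j
                    + A i j k (γ t) * dγ t i * ddγ t j) * dlt k m) := by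
      rw [hfun2]; exact H.deriv
    have hpdx := pdX q c A hAsmooth L hL (γ t) (dγ t) m
    rw [hpdx, hder]
    -- abbreviations for the structured sums
    have F_B : (1:ℝ) / 2 * (((dlt 0 m * ddγ t 1 + ddγ t 0 * dlt 1 m) * dγ t 2
              + (dlt 0 m * dγ t 1 + dγ t 0 * dlt 1 m) * ddγ t 2
              + (ddγ t 0 * dγ t 1 + dγ t 0 * ddγ t 1) * dlt 2 m) * dγ t 3
            + ((dlt 0 m * dγ t 1 + dγ t 0 * dlt 1 m) * dγ t 2
                + dγ t 0 * dγ t 1 * dlt 2 m) * ddγ t 3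
            + ((ddγ t 0 * dγ t 1 + dγ t 0 * ddγ t 1) * dγ t 2
                + dγ t 0 * dγ t 1 * ddγ t 2) * dlt 3 m)
        = 6 * ∑ j : Fin 4, h m j (dγ t) * ddγ t j := by
      rw [Fin.sum_univ_four]
      simp only [hh, pdpdP, dlt_same, dlt_eq_zero_of_ne (by decide : (0:Fin 4) ≠ 1),
        dlt_eq_zero_of_ne (by decide : (0:Fin 4) ≠ 2), dlt_eq_zero_of_ne (by decide : (0:Fin 4) ≠ 3),
        dlt_eq_zero_of_ne (by decide : (1:Fin 4) ≠ 0), dlt_eq_zero_of_ne (by decide : (1:Fin 4) ≠ 2),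
        dlt_eq_zero_of_ne (by decide : (1:Fin 4) ≠ 3), dlt_eq_zero_of_ne (by decide : (2:Fin 4) ≠ 0),
        dlt_eq_zero_of_ne (by decide : (2:Fin 4) ≠ 1), dlt_eq_zero_of_ne (by decide : (2:Fin 4) ≠ 3),
        dlt_eq_zero_of_ne (by decide : (3:Fin 4) ≠ 0), dlt_eq_zero_of_ne (by decide : (3:Fin 4) ≠ 1),
        dlt_eq_zero_of_ne (by decide : (3:Fin 4) ≠ 2)]
      ring
    have F_A : (∑ i : Fin 4, ∑ j : Fin 4, ∑ k : Fin 4,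
              (((∑ l : Fin 4, pd l (A i j k) (γ t) * dγ t l) * dlt i m * dγ t j
                  + A i j k (γ t) * dlt i m * ddγ t j
                  + ((∑ l : Fin 4, pd l (A i j k) (γ t) * dγ t l) * dγ t i
                      + A i j k (γ t) * ddγ t i) * dlt j m) * dγ t k
                + (A i j k (γ t) * dlt i m * dγ t j
                    + A i j k (γ t) * dγ t i * dlt j m) * ddγ t k
                + (((∑ l : Fin 4, pd l (A i j k) (γ t) * dγ t l) * dγ t i
                      + A i j k (γ t) * ddγ t i) * dγ t j
                    + A i j k (γ t) * dγ t i * ddγ t j) * dlt k m))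
        = 3 * (∑ a : Fin 4, ∑ b : Fin 4, ∑ l : Fin 4,
              pd l (A m a b) (γ t) * dγ t l * dγ t a * dγ t b)
          + 6 * (∑ a : Fin 4, ∑ b : Fin 4, A m a b (γ t) * ddγ t a * dγ t b) := by
      have hΦ : (∑ a : Fin 4, ∑ b : Fin 4,
            ((∑ l : Fin 4, pd l (A m a b) (γ t) * dγ t l) * dγ t a * dγ t b
              + A m a b (γ t) * ddγ t a * dγ t b
              + A m a b (γ t) * dγ t a * ddγ t b))
          = (∑ a : Fin 4, ∑ b : Fin 4, ∑ l : Fin 4,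
              pd l (A m a b) (γ t) * dγ t l * dγ t a * dγ t b)
            + (∑ a : Fin 4, ∑ b : Fin 4, A m a b (γ t) * ddγ t a * dγ t b)
            + (∑ a : Fin 4, ∑ b : Fin 4, A m a b (γ t) * ddγ t a * dγ t b) := by
        have e1 : (∑ a : Fin 4, ∑ b : Fin 4,
              (∑ l : Fin 4, pd l (A m a b) (γ t) * dγ t l) * dγ t a * dγ t b)
            = ∑ a : Fin 4, ∑ b : Fin 4, ∑ l : Fin 4,
                pd l (A m a b) (γ t) * dγ t l * dγ t a * dγ t b :=
          sum2_congr fun a b => by rw [Finset.sum_mul, Finset.sum_mul]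
        have e3 : (∑ a : Fin 4, ∑ b : Fin 4, A m a b (γ t) * dγ t a * ddγ t b)
            = ∑ a : Fin 4, ∑ b : Fin 4, A m a b (γ t) * ddγ t a * dγ t b := by
          rw [Finset.sum_comm]
          exact sum2_congr fun a b => by rw [hs2 m b a]; ring
        simp only [Finset.sum_add_distrib]
        rw [e1, e3]
      calc (∑ i : Fin 4, ∑ j : Fin 4, ∑ k : Fin 4,
              (((∑ l : Fin 4, pd l (A i j k) (γ t) * dγ t l) * dlt i m * dγ t j
                  + A i j k (γ t) * dlt i m * ddγ t j
                  + ((∑ l : Fin 4, pd l (A i j k) (γ t) * dγ t l) * dγ t i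
                      + A i j k (γ t) * ddγ t i) * dlt j m) * dγ t k
                + (A i j k (γ t) * dlt i m * dγ t j
                    + A i j k (γ t) * dγ t i * dlt j m) * ddγ t k
                + (((∑ l : Fin 4, pd l (A i j k) (γ t) * dγ t l) * dγ t i
                      + A i j k (γ t) * ddγ t i) * dγ t j
                    + A i j k (γ t) * dγ t i * ddγ t j) * dlt k m))
          = ∑ i : Fin 4, ∑ j : Fin 4, ∑ k : Fin 4,
              (dlt i m * ((∑ l : Fin 4, pd l (A i j k) (γ t) * dγ t l) * dγ t j * dγ t k
                  + A i j k (γ t) * ddγ t j * dγ t k + A i j k (γ t) * dγ t j * ddγ t k)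
                + dlt j m * ((∑ l : Fin 4, pd l (A i j k) (γ t) * dγ t l) * dγ t i * dγ t k
                  + A i j k (γ t) * ddγ t i * dγ t k + A i j k (γ t) * dγ t i * ddγ t k)
                + dlt k m * ((∑ l : Fin 4, pd l (A i j k) (γ t) * dγ t l) * dγ t i * dγ t j
                  + A i j k (γ t) * ddγ t i * dγ t j + A i j k (γ t) * dγ t i * ddγ t j)) :=
            sum3_congr fun i j k => by ring
        _ = (∑ j : Fin 4, ∑ k : Fin 4,
              ((∑ l : Fin 4, pd l (A m j k) (γ t) * dγ t l) * dγ t j * dγ t k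
                + A m j k (γ t) * ddγ t j * dγ t k + A m j k (γ t) * dγ t j * ddγ t k))
            + (∑ i : Fin 4, ∑ k : Fin 4,
              ((∑ l : Fin 4, pd l (A i m k) (γ t) * dγ t l) * dγ t i * dγ t k
                + A i m k (γ t) * ddγ t i * dγ t k + A i m k (γ t) * dγ t i * ddγ t k))
            + (∑ i : Fin 4, ∑ j : Fin 4,
              ((∑ l : Fin 4, pd l (A i j m) (γ t) * dγ t l) * dγ t i * dγ t j
                + A i j m (γ t) * ddγ t i * dγ t j + A i j m (γ t) * dγ t i * ddγ t j)) := by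
            simp only [Finset.sum_add_distrib]
            rw [collapse1, collapse2, collapse3]
            simp only [Finset.sum_add_distrib]
        _ = (∑ a : Fin 4, ∑ b : Fin 4,
              ((∑ l : Fin 4, pd l (A m a b) (γ t) * dγ t l) * dγ t a * dγ t b
                + A m a b (γ t) * ddγ t a * dγ t b + A m a b (γ t) * dγ t a * ddγ t b))
            + (∑ a : Fin 4, ∑ b : Fin 4,
              ((∑ l : Fin 4, pd l (A m a b) (γ t) * dγ t l) * dγ t a * dγ t b
                + A m a b (γ t) * ddγ t a * dγ t b + A m a b (γ t) * dγ t a * ddγ t b))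
            + (∑ a : Fin 4, ∑ b : Fin 4,
              ((∑ l : Fin 4, pd l (A m a b) (γ t) * dγ t l) * dγ t a * dγ t b
                + A m a b (γ t) * ddγ t a * dγ t b + A m a b (γ t) * dγ t a * ddγ t b)) := by
            have g2 : (∑ i : Fin 4, ∑ k : Fin 4,
                ((∑ l : Fin 4, pd l (A i m k) (γ t) * dγ t l) * dγ t i * dγ t k
                  + A i m k (γ t) * ddγ t i * dγ t k + A i m k (γ t) * dγ t i * ddγ t k))
              = (∑ a : Fin 4, ∑ b : Fin 4,
                ((∑ l : Fin 4, pd l (A m a b) (γ t) * dγ t l) * dγ t a * dγ t b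
                  + A m a b (γ t) * ddγ t a * dγ t b + A m a b (γ t) * dγ t a * ddγ t b)) :=
              sum2_congr fun a b => by rw [hs1 a m b]
            have g3 : (∑ i : Fin 4, ∑ j : Fin 4,
                ((∑ l : Fin 4, pd l (A i j m) (γ t) * dγ t l) * dγ t i * dγ t j
                  + A i j m (γ t) * ddγ t i * dγ t j + A i j m (γ t) * dγ t i * ddγ t j))
              = (∑ a : Fin 4, ∑ b : Fin 4,
                ((∑ l : Fin 4, pd l (A m a b) (γ t) * dγ t l) * dγ t a * dγ t b
                  + A m a b (γ t) * ddγ t a * dγ t b + A m a b (γ t) * dγ t a * ddγ t b)) :=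
              sum2_congr fun a b => by rw [hs2 a b m, hs1 a m b]
            rw [g2, g3]
        _ = 3 * (∑ a : Fin 4, ∑ b : Fin 4, ∑ l : Fin 4,
              pd l (A m a b) (γ t) * dγ t l * dγ t a * dγ t b)
          + 6 * (∑ a : Fin 4, ∑ b : Fin 4, A m a b (γ t) * ddγ t a * dγ t b) := by
            rw [hΦ]; ring
    have F_C : (∑ j : Fin 4, ∑ k : Fin 4, ∑ l : Fin 4,
            (pd l (A m j k) (γ t) + pd j (A m l k) (γ t)
              + pd k (A m j l) (γ t) - pd m (A l j k) (γ t))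
              * dγ t l * dγ t j * dγ t k)
        = 3 * (∑ a : Fin 4, ∑ b : Fin 4, ∑ l : Fin 4,
              pd l (A m a b) (γ t) * dγ t l * dγ t a * dγ t b)
          - (∑ i : Fin 4, ∑ j : Fin 4, ∑ k : Fin 4,
              pd m (A i j k) (γ t) * dγ t i * dγ t j * dγ t k) := by
      have hT2 : (∑ j : Fin 4, ∑ k : Fin 4, ∑ l : Fin 4,
            pd j (A m l k) (γ t) * dγ t l * dγ t j * dγ t k)
          = ∑ a : Fin 4, ∑ b : Fin 4, ∑ l : Fin 4,
              pd l (A m a b) (γ t) * dγ t l * dγ t a * dγ t b := by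
        rw [sum_comm3_13 (fun j k l => pd j (A m l k) (γ t) * dγ t l * dγ t j * dγ t k)]
        exact sum3_congr fun a b c => by ring
      have hT3 : (∑ j : Fin 4, ∑ k : Fin 4, ∑ l : Fin 4,
            pd k (A m j l) (γ t) * dγ t l * dγ t j * dγ t k)
          = ∑ a : Fin 4, ∑ b : Fin 4, ∑ l : Fin 4,
              pd l (A m a b) (γ t) * dγ t l * dγ t a * dγ t b := by
        rw [sum_comm3_23 (fun j k l => pd k (A m j l) (γ t) * dγ t l * dγ t j * dγ t k)]
        exact sum3_congr fun a b c => by ring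
      have hT4 : (∑ j : Fin 4, ∑ k : Fin 4, ∑ l : Fin 4,
            pd m (A l j k) (γ t) * dγ t l * dγ t j * dγ t k)
          = ∑ i : Fin 4, ∑ j : Fin 4, ∑ k : Fin 4,
              pd m (A i j k) (γ t) * dγ t i * dγ t j * dγ t k := by
        rw [sum_comm3_13 (fun j k l => pd m (A l j k) (γ t) * dγ t l * dγ t j * dγ t k)]
        exact sum3_congr fun a b c => by rw [hs2 a c b]; ring
      calc (∑ j : Fin 4, ∑ k : Fin 4, ∑ l : Fin 4,
            (pd l (A m j k) (γ t) + pd j (A m l k) (γ t)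
              + pd k (A m j l) (γ t) - pd m (A l j k) (γ t))
              * dγ t l * dγ t j * dγ t k)
          = ∑ j : Fin 4, ∑ k : Fin 4, ∑ l : Fin 4,
              (pd l (A m j k) (γ t) * dγ t l * dγ t j * dγ t k
                + pd j (A m l k) (γ t) * dγ t l * dγ t j * dγ t k
                + pd k (A m j l) (γ t) * dγ t l * dγ t j * dγ t k
                - pd m (A l j k) (γ t) * dγ t l * dγ t j * dγ t k) :=
            sum3_congr fun j k l => by ring
        _ = _ := by
            simp only [Finset.sum_add_distrib, Finset.sum_sub_distrib]
            rw [hT2, hT3, hT4]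
            ring
    have F_split : (∑ j : Fin 4,
          (h m j (dγ t) + (q / c) * ∑ k : Fin 4, A m j k (γ t) * dγ t k) * ddγ t j)
        = (∑ j : Fin 4, h m j (dγ t) * ddγ t j)
          + (q / c) * ∑ j : Fin 4, ∑ k : Fin 4, A m j k (γ t) * dγ t k * ddγ t j := by
      have e1 : ∀ j : Fin 4,
          (h m j (dγ t) + (q / c) * ∑ k : Fin 4, A m j k (γ t) * dγ t k) * ddγ t j
          = h m j (dγ t) * ddγ t j
            + (q / c) * ∑ k : Fin 4, A m j k (γ t) * dγ t k * ddγ t j := by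
        intro j
        rw [add_mul, mul_assoc, Finset.sum_mul]
      calc (∑ j : Fin 4,
          (h m j (dγ t) + (q / c) * ∑ k : Fin 4, A m j k (γ t) * dγ t k) * ddγ t j)
          = ∑ j : Fin 4, (h m j (dγ t) * ddγ t j
              + (q / c) * ∑ k : Fin 4, A m j k (γ t) * dγ t k * ddγ t j) :=
            Finset.sum_congr rfl fun j _ => e1 j
        _ = _ := by
            rw [Finset.sum_add_distrib, ← Finset.mul_sum]
    have F_Zc : (∑ a : Fin 4, ∑ b : Fin 4, A m a b (γ t) * ddγ t a * dγ t b)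
        = ∑ j : Fin 4, ∑ k : Fin 4, A m j k (γ t) * dγ t k * ddγ t j :=
      sum2_congr fun a b => by ring
    linear_combination (-(q/c)) * F_A - F_B + (q/c) * F_C + 6 * F_split - 6*(q/c) * F_Zc
  constructor
  · intro H0 m t
    have h1 := H0 m t
    rw [key m t] at h1
    linarith
  · intro H0 m t
    rw [key m t, H0 m t, neg_zero]
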